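/- For all x ≥ 0 and L > 0, Ψ₂(x; L) ≥ Ψ₁(x; L/3), where Ψ₂(x; L) = exp((2/L²)·h₂(Lx)) − 1 and Ψ₁(x; M) = exp((2/M²)·h₁(Mx)) − 1. -/

import Mathlib

noncomputable def h₁ (x : ℝ) : ℝ := 1 + x - Real.sqrt (1 + 2 * x)
noncomputable def h₂ (x : ℝ) : ℝ := (1 + x) * Real.log (1 + x) - x
noncomputable def Ψ₁ (x M : ℝ) : ℝ := Real.exp ((2 / M ^ 2) * h₁ (M * x)) - 1
noncomputable def Ψ₂ (x L : ℝ) : ℝ := Real.exp ((2 / L ^ 2) * h₂ (L * x)) - 1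

/-!
Both `h₂ u` and `9 h₁ (u / 3)` vanish together with their first derivatives at `u = 0`, and
their second derivatives compare: `(1 + u)⁻¹ ≥ (1 + 2u/3)^(-3/2)`, because
`(1 + 2u/3)³ - (1 + u)² = u²/3 + 8u³/27 ≥ 0`. Integrating twice gives `9 h₁ (u / 3) ≤ h₂ u`, and
the scaling `2 / (L/3)² = 9 · 2 / L²` turns this into the claim for `u = L x`.
-/

open Real Set

lemma monotoneOn_of_hasDerivAt_nonneg {D : Set ℝ} (hD : Convex ℝ D) {f f' : ℝ → ℝ}
    (hf : ∀ x ∈ D, HasDerivAt f (f' x) x) (hf'₀ : ∀ x ∈ D, 0 ≤ f' x) : MonotoneOn f D :=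
  monotoneOn_of_hasDerivWithinAt_nonneg hD (fun x hx ↦ (hf x hx).continuousAt.continuousWithinAt)
    (fun x hx ↦ (hf x (interior_subset hx)).hasDerivWithinAt)
    (fun x hx ↦ hf'₀ x (interior_subset hx))

lemma hasDerivAt_h₂ {x : ℝ} (hx : -1 < x) : HasDerivAt h₂ (log (1 + x)) x := by
  have hx' : 1 + x ≠ 0 := by linarith
  have h := (((hasDerivAt_id' x).const_add 1).mul
    (((hasDerivAt_id' x).const_add 1).log hx')).sub (hasDerivAt_id' x)
  exact h.congr_deriv (by field_simp; ring)

lemma hasDerivAt_h₁ {x : ℝ} (hx : 0 < 1 + 2 * x) :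
    HasDerivAt h₁ (1 - (√(1 + 2 * x))⁻¹) x := by
  have h := ((hasDerivAt_id' x).const_add 1).sub
    ((((hasDerivAt_id' x).const_mul 2).const_add 1).sqrt hx.ne')
  exact h.congr_deriv (by field_simp)

lemma hasDerivAt_one_sub_inv_sqrt {x : ℝ} (hx : 0 < 1 + 2 * x) :
    HasDerivAt (fun y ↦ 1 - (√(1 + 2 * y))⁻¹) ((√(1 + 2 * x) ^ 3)⁻¹) x := by
  have h := (((((hasDerivAt_id' x).const_mul 2).const_add 1).sqrt hx.ne').inv
    (sqrt_pos.2 hx).ne').const_sub 1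
  exact h.congr_deriv (by field_simp)

lemma one_add_le_sqrt_pow_three {u : ℝ} (hu : 0 ≤ u) : 1 + u ≤ √(1 + 2 * (u / 3)) ^ 3 := by
  have h : 0 ≤ 1 + 2 * (u / 3) := by positivity
  refine le_of_sq_le_sq ?_ (by positivity)
  rw [← pow_mul, show 3 * 2 = 2 * 3 by rfl, pow_mul, sq_sqrt h]
  nlinarith [sq_nonneg u, pow_nonneg hu 3]

lemma three_mul_one_sub_inv_sqrt_le_log {u : ℝ} (hu : 0 ≤ u) :
    3 * (1 - (√(1 + 2 * (u / 3)))⁻¹) ≤ log (1 + u) := by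
  let g : ℝ → ℝ := fun v ↦ log (1 + v) - 3 * (1 - (√(1 + 2 * (v / 3)))⁻¹)
  have hg : ∀ v ∈ Ici (0 : ℝ), HasDerivAt g ((1 + v)⁻¹ - (√(1 + 2 * (v / 3)) ^ 3)⁻¹) v := by
    intro v (hv : 0 ≤ v)
    have h := (((hasDerivAt_id' v).const_add 1).log (by positivity)).sub
      (((hasDerivAt_one_sub_inv_sqrt (x := v / 3) (by positivity)).comp v
        ((hasDerivAt_id' v).div_const 3)).const_mul 3)
    exact h.congr_deriv (by field_simp)
  have hg' : ∀ v ∈ Ici (0 : ℝ), 0 ≤ (1 + v)⁻¹ - (√(1 + 2 * (v / 3)) ^ 3)⁻¹ :=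
    fun v (hv : 0 ≤ v) ↦
      sub_nonneg.2 (inv_anti₀ (by positivity) (one_add_le_sqrt_pow_three hv))
  have := monotoneOn_of_hasDerivAt_nonneg (convex_Ici 0) hg hg' self_mem_Ici hu hu
  simpa [g] using this

lemma nine_mul_h₁_div_three_le_h₂ {u : ℝ} (hu : 0 ≤ u) : 9 * h₁ (u / 3) ≤ h₂ u := by
  let f : ℝ → ℝ := fun v ↦ h₂ v - 9 * h₁ (v / 3)
  have hf : ∀ v ∈ Ici (0 : ℝ),
      HasDerivAt f (log (1 + v) - 3 * (1 - (√(1 + 2 * (v / 3)))⁻¹)) v := by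
    intro v (hv : 0 ≤ v)
    have h := (hasDerivAt_h₂ (by linarith)).sub
      (((hasDerivAt_h₁ (x := v / 3) (by positivity)).comp v
        ((hasDerivAt_id' v).div_const 3)).const_mul 9)
    exact h.congr_deriv (by ring)
  have hf' : ∀ v ∈ Ici (0 : ℝ), 0 ≤ log (1 + v) - 3 * (1 - (√(1 + 2 * (v / 3)))⁻¹) :=
    fun v hv ↦ sub_nonneg.2 (three_mul_one_sub_inv_sqrt_le_log hv)
  have := monotoneOn_of_hasDerivAt_nonneg (convex_Ici 0) hf hf' self_mem_Ici hu hu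
  simpa [f, h₁, h₂] using this

theorem Psi2_ge_Psi1 (x L : ℝ) (hx : 0 ≤ x) (hL : 0 < L) :
    Ψ₂ x L ≥ Ψ₁ x (L / 3) := by
  have hscale : 2 / (L / 3) ^ 2 * h₁ (L / 3 * x) = 2 / L ^ 2 * (9 * h₁ (L * x / 3)) := by
    field_simp
    ring_nf
  unfold Ψ₁ Ψ₂
  rw [hscale]
  gcongr
  exact nine_mul_h₁_div_three_le_h₂ (by positivity)
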